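/- arXiv:1511.09340 — 6 statements merged into one kernel-verified Lean document; each statement's English description precedes it below -/
import Mathlib

section
/- Let p and q be odd prime numbers with p a quadratic non-residue modulo q (in particular p ≠ q). Then every type-I solution of level k satisfies q⁴ ≤ 4·p^k. -/
/-!
Reducing modulo `q` gives `a² ≡ p^k`, so `k = 2m` is even because `p` is a non-residue.
With `x = p^m` the equation reads `(x - a)(x + a) = b² + c² + d²`, a positive multiple of `q²`.
Since `q ∤ 2x` (`q ≠ 2` because every element of `𝔽₂` is a square, and `q ∤ p`), `q` divides
at most one of the two factors, so `q²` divides one of them. Both factors lie in `(0, 2x)`,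
hence `q² < 2x` and `q⁴ < 4p^k`.
-/

theorem ZMod.ne_two_of_not_isSquare {q : ℕ} {x : ZMod q} (hx : ¬ IsSquare x) : q ≠ 2 := by
  rintro rfl
  fin_cases x
  · exact hx ⟨0, rfl⟩
  · exact hx ⟨1, rfl⟩

theorem ZMod.not_dvd_two_mul_pow_of_not_isSquare {q n : ℕ} (hq : q.Prime)
    (hn : ¬ IsSquare (n : ZMod q)) (m : ℕ) : ¬ (q : ℤ) ∣ 2 * n ^ m := by
  have hqZ : Prime (q : ℤ) := Nat.prime_iff_prime_int.mp hq
  have hq_two : ¬ (q : ℤ) ∣ 2 := fun h => ZMod.ne_two_of_not_isSquare hn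
    ((Nat.prime_dvd_prime_iff_eq hq Nat.prime_two).1 (by exact_mod_cast h))
  have hq_n : ¬ (q : ℤ) ∣ n := fun h => hn <| by
    rw [(ZMod.natCast_eq_zero_iff n q).2 (by exact_mod_cast h)]
    exact IsSquare.zero
  exact hqZ.not_dvd_mul hq_two (mt hqZ.dvd_of_dvd_pow hq_n)

theorem even_of_isSquare_pow_of_not_isSquare {G₀ : Type*} [CommGroupWithZero G₀] {x : G₀}
    {k : ℕ} (hx : ¬ IsSquare x) (hxk : IsSquare (x ^ k)) : Even k := by
  refine (Nat.even_or_odd k).resolve_right ?_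
  rintro ⟨m, rfl⟩
  have hx0 : x ≠ 0 := by
    rintro rfl
    exact hx IsSquare.zero
  have hx_eq : x = x ^ (2 * m + 1) / (x ^ m) ^ 2 := by
    rw [← pow_mul, mul_comm m 2, pow_succ', mul_div_cancel_right₀ _ (pow_ne_zero _ hx0)]
  exact hx (hx_eq ▸ hxk.div (IsSquare.sq _))

theorem Prime.pow_dvd_sub_or_pow_dvd_add {R : Type*} [CommRing R] [IsDomain R] {q x a : R}
    (hq : Prime q) (hx : ¬ q ∣ 2 * x) {n : ℕ} (h : q ^ n ∣ (x - a) * (x + a)) :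
    q ^ n ∣ x - a ∨ q ^ n ∣ x + a := by
  by_cases hsub : q ∣ x - a
  · refine Or.inl (hq.pow_dvd_of_dvd_mul_right n (fun hadd => hx ?_) h)
    convert dvd_add hsub hadd using 1
    ring
  · exact Or.inr (hq.pow_dvd_of_dvd_mul_left n hsub h)

theorem Int.sq_lt_two_mul_of_sq_dvd_sq_sub_sq {q x a : ℤ} (hq : Prime q) (hx : ¬ q ∣ 2 * x)
    (hx0 : 0 ≤ x) (hpos : 0 < x ^ 2 - a ^ 2) (h : q ^ 2 ∣ x ^ 2 - a ^ 2) : q ^ 2 < 2 * x := by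
  obtain ⟨hlt, hgt⟩ := abs_lt_of_sq_lt_sq' (sub_pos.1 hpos) hx0
  rw [sq_sub_sq, mul_comm] at h
  rcases hq.pow_dvd_sub_or_pow_dvd_add hx h with hdvd | hdvd
  · exact (Int.le_of_dvd (by linarith) hdvd).trans_lt (by linarith)
  · exact (Int.le_of_dvd (by linarith) hdvd).trans_lt (by linarith)

theorem lps_typeI_lower_bound_of_nonresidue_general
    (p q : ℕ) (hq : q.Prime)
    (hnr : ¬ IsSquare ((p : ZMod q)))
    (k : ℕ) (a b c d : ℤ)
    (hb : (2 * (q : ℤ)) ∣ b) (hc : (2 * (q : ℤ)) ∣ c) (hd : (2 * (q : ℤ)) ∣ d)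
    (hne : ¬ (b = 0 ∧ c = 0 ∧ d = 0))
    (hsum : a ^ 2 + b ^ 2 + c ^ 2 + d ^ 2 = (p : ℤ) ^ k) :
    (q : ℤ) ^ 4 ≤ 4 * (p : ℤ) ^ k := by
  have := Fact.mk hq
  have hsq_dvd : (q : ℤ) ^ 2 ∣ b ^ 2 + c ^ 2 + d ^ 2 := by
    have h2q {y : ℤ} (hy : 2 * (q : ℤ) ∣ y) : (q : ℤ) ^ 2 ∣ y ^ 2 :=
      pow_dvd_pow_of_dvd (dvd_of_mul_left_dvd hy) 2
    exact ((h2q hb).add (h2q hc)).add (h2q hd)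
  have hsq_pos : 0 < b ^ 2 + c ^ 2 + d ^ 2 := by
    contrapose! hne
    refine ⟨?_, ?_, ?_⟩ <;> nlinarith [sq_nonneg b, sq_nonneg c, sq_nonneg d]
  have hsub : (p : ℤ) ^ k - a ^ 2 = b ^ 2 + c ^ 2 + d ^ 2 := by linear_combination -hsum
  obtain ⟨m, rfl⟩ : Even k := by
    refine even_of_isSquare_pow_of_not_isSquare hnr ⟨(a : ZMod q), ?_⟩
    have hmod := (ZMod.intCast_eq_intCast_iff_dvd_sub (a ^ 2) (p ^ k) q).2
      (hsub ▸ (dvd_pow_self _ two_ne_zero).trans hsq_dvd)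
    push_cast at hmod
    rw [← hmod, sq]
  have hdiff : ((p : ℤ) ^ m) ^ 2 - a ^ 2 = b ^ 2 + c ^ 2 + d ^ 2 := by
    rw [← hsub]
    ring
  have hlt := Int.sq_lt_two_mul_of_sq_dvd_sq_sub_sq (Nat.prime_iff_prime_int.mp hq)
    (ZMod.not_dvd_two_mul_pow_of_not_isSquare hq hnr m) (by positivity)
    (hdiff ▸ hsq_pos) (hdiff ▸ hsq_dvd)
  calc (q : ℤ) ^ 4 = ((q : ℤ) ^ 2) ^ 2 := by ring
    _ ≤ (2 * (p : ℤ) ^ m) ^ 2 := pow_le_pow_left₀ (by positivity) hlt.le 2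
    _ = 4 * (p : ℤ) ^ (m + m) := by ring

/-- Let `p` and `q` be odd primes with `p` a quadratic non-residue
modulo `q`. Then every type-I solution of level `k` (i.e. a quadruple `(a,b,c,d)` of
integers with `a` odd, `2q ∣ b, c, d`, not all of `b, c, d` zero, and
`a² + b² + c² + d² = p^k`) satisfies `q⁴ ≤ 4·p^k`. -/
theorem lps_typeI_lower_bound_of_nonresidue
    (p q : ℕ) (hp : p.Prime) (hq : q.Prime) (hpodd : Odd p) (hqodd : Odd q)
    (hnr : ¬ IsSquare ((p : ZMod q)))
    (k : ℕ) (a b c d : ℤ)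
    (ha : Odd a)
    (hb : (2 * (q : ℤ)) ∣ b) (hc : (2 * (q : ℤ)) ∣ c) (hd : (2 * (q : ℤ)) ∣ d)
    (hne : ¬ (b = 0 ∧ c = 0 ∧ d = 0))
    (hsum : a ^ 2 + b ^ 2 + c ^ 2 + d ^ 2 = (p : ℤ) ^ k) :
    (q : ℤ) ^ 4 ≤ 4 * (p : ℤ) ^ k :=
  lps_typeI_lower_bound_of_nonresidue_general p q hq hnr k a b c d hb hc hd hne hsum
end

section
/- Let p and q be distinct odd prime numbers. If there exist a type-I solution of level k₁ and a type-II solution of level k₂, then q⁴ ≤ 4·p^{k₁} or q⁴ ≤ 4·p^{k₂}. -/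
/-- If `q² ∣ X² − w²`, `q ∤ X`, and `X², w² ≤ N` with `4N < q⁴`, then `X = ±w`. -/
lemma sq_root_rigid (q X w N : ℤ) (hq : Prime q) (hqodd : Odd q)
    (hX2 : X ^ 2 ≤ N) (hw2 : w ^ 2 ≤ N) (hN : 4 * N < q ^ 4)
    (hdvd : q ^ 2 ∣ X ^ 2 - w ^ 2) (hqX : ¬ q ∣ X) :
    X = w ∨ X = -w := by
  have hnb : ¬ (q ∣ X - w ∧ q ∣ X + w) := by
    rintro ⟨h1, h2⟩
    have h3 : q ∣ 2 * X := by
      have h4 := dvd_add h1 h2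
      rwa [show X - w + (X + w) = 2 * X by ring] at h4
    rcases hq.2.2 2 X h3 with h4 | h4
    · have h5 : q.natAbs ∣ 2 := by
        have h6 := Int.natAbs_dvd_natAbs.mpr h4; simpa using h6
      have h6 : q.natAbs = 2 :=
        (Nat.prime_dvd_prime_iff_eq (Int.prime_iff_natAbs_prime.mp hq) Nat.prime_two).mp h5
      have h7 : Even q := by
        have h8 : Even q.natAbs := by rw [h6]; exact even_two
        exact Int.natAbs_even.mp h8
      exact (Int.not_odd_iff_even.mpr h7) hqodd
    · exact hqX h4
  have hprod : q ^ 2 ∣ (X - w) * (X + w) := by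
    rwa [show (X - w) * (X + w) = X ^ 2 - w ^ 2 by ring]
  have hq2pos : (0:ℤ) < q ^ 2 := (sq_nonneg q).lt_of_ne (Ne.symm (pow_ne_zero 2 hq.ne_zero))
  have key : ∀ D : ℤ, q ^ 2 ∣ D → D ^ 2 ≤ 4 * N → D = 0 := by
    intro D hD hDle
    by_contra hD0
    have h1 : q ^ 2 ≤ |D| := Int.le_of_dvd (abs_pos.mpr hD0) ((dvd_abs _ _).mpr hD)
    have h2 : q ^ 2 * q ^ 2 ≤ |D| * |D| := mul_le_mul h1 h1 hq2pos.le (abs_nonneg D)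
    have h3 : |D| * |D| = D ^ 2 := by rw [← abs_mul, abs_mul_self, ← pow_two]
    nlinarith
  rcases em (q ∣ X - w) with h | h
  · left
    have hco : IsCoprime (q ^ 2) (X + w) :=
      ((hq.coprime_iff_not_dvd).mpr fun hc => hnb ⟨h, hc⟩).pow_left
    have h0 : X - w = 0 :=
      key (X - w) (hco.dvd_of_dvd_mul_right hprod) (by nlinarith [sq_nonneg (X + w)])
    linarith
  · right
    have hco : IsCoprime (q ^ 2) (X - w) := ((hq.coprime_iff_not_dvd).mpr h).pow_left
    have h0 : X + w = 0 :=
      key (X + w) (hco.dvd_of_dvd_mul_left hprod) (by nlinarith [sq_nonneg (X - w)])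
    linarith

lemma not_dvd_root (p q : ℕ) (hp : p.Prime) (hq : q.Prime) (hpq : p ≠ q) (k : ℕ) (X : ℤ)
    (h : (q:ℤ) ^ 2 ∣ (p:ℤ) ^ k - X ^ 2) : ¬ (q:ℤ) ∣ X := by
  intro hdX
  have h2 : (q:ℤ) ∣ (p:ℤ) ^ k - X ^ 2 := dvd_trans (dvd_pow_self (q:ℤ) two_ne_zero) h
  have h3 : (q:ℤ) ∣ X ^ 2 := dvd_pow hdX two_ne_zero
  have h1 : (q:ℤ) ∣ (p:ℤ) ^ k := by
    have h4 := dvd_add h2 h3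
    rwa [show (p:ℤ) ^ k - X ^ 2 + X ^ 2 = (p:ℤ) ^ k by ring] at h4
  have h4 : q ∣ p ^ k := by exact_mod_cast h1
  exact hpq ((Nat.prime_dvd_prime_iff_eq hq hp).mp (hq.dvd_of_dvd_pow h4)).symm

/-- Let `p` and `q` be distinct odd primes. If there exist a type-I
solution of level `k₁` and a type-II solution of level `k₂`, then `q⁴ ≤ 4·p^{k₁}` or
`q⁴ ≤ 4·p^{k₂}`. -/
theorem lps_typeI_typeII_lower_bound
    (p q : ℕ) (hp : p.Prime) (hq : q.Prime) (hpodd : Odd p) (hqodd : Odd q)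
    (hpq : p ≠ q) (k₁ k₂ : ℕ)
    (h₁ : ∃ a b c d : ℤ, Odd a ∧
      (2 * (q : ℤ)) ∣ b ∧ (2 * (q : ℤ)) ∣ c ∧ (2 * (q : ℤ)) ∣ d ∧
      ¬ (b = 0 ∧ c = 0 ∧ d = 0) ∧
      a ^ 2 + b ^ 2 + c ^ 2 + d ^ 2 = (p : ℤ) ^ k₁)
    (h₂ : ∃ a b c d : ℤ, Odd a ∧
      (q : ℤ) ∣ a ∧ (q : ℤ) ∣ b ∧ (q : ℤ) ∣ d ∧ Even c ∧
      a ^ 2 + b ^ 2 + c ^ 2 + d ^ 2 = (p : ℤ) ^ k₂) :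
    (q : ℤ) ^ 4 ≤ 4 * (p : ℤ) ^ k₁ ∨ (q : ℤ) ^ 4 ≤ 4 * (p : ℤ) ^ k₂ := by
  by_contra hcon
  push_neg at hcon
  obtain ⟨hlt₁, hlt₂⟩ := hcon
  obtain ⟨a, b, c, d, haodd, hb, hc, hd, hne, heq1⟩ := h₁
  obtain ⟨a', b', c', d', ha'odd, hqa', hqb', hqd', hceven, heq2⟩ := h₂
  obtain ⟨b₁, rfl⟩ := hb
  obtain ⟨c₁, rfl⟩ := hc
  obtain ⟨d₁, rfl⟩ := hd
  obtain ⟨A, rfl⟩ := hqa'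
  obtain ⟨B, rfl⟩ := hqb'
  obtain ⟨D, rfl⟩ := hqd'
  have hqZ : Prime (q:ℤ) := Nat.prime_iff_prime_int.mp hq
  have hqoddZ : Odd (q:ℤ) := by exact_mod_cast hqodd
  have hpoddZ : Odd (p:ℤ) := by exact_mod_cast hpodd
  have hd1 : (q:ℤ) ^ 2 ∣ (p:ℤ) ^ k₁ - a ^ 2 :=
    ⟨4 * (b₁ ^ 2 + c₁ ^ 2 + d₁ ^ 2), by linear_combination -heq1⟩
  have hd2 : (q:ℤ) ^ 2 ∣ (p:ℤ) ^ k₂ - c' ^ 2 :=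
    ⟨A ^ 2 + B ^ 2 + D ^ 2, by linear_combination -heq2⟩
  have hqa : ¬ (q:ℤ) ∣ a := not_dvd_root p q hp hq hpq k₁ a hd1
  have hqc : ¬ (q:ℤ) ∣ c' := not_dvd_root p q hp hq hpq k₂ c' hd2
  have ha2 : a ^ 2 ≤ (p:ℤ) ^ k₁ := by
    nlinarith [sq_nonneg (2*(q:ℤ)*b₁), sq_nonneg (2*(q:ℤ)*c₁), sq_nonneg (2*(q:ℤ)*d₁)]
  have hc2 : c' ^ 2 ≤ (p:ℤ) ^ k₂ := by
    nlinarith [sq_nonneg ((q:ℤ)*A), sq_nonneg ((q:ℤ)*B), sq_nonneg ((q:ℤ)*D)]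
  rcases Nat.even_or_odd k₂ with hk2e | hk2o
  · -- k₂ even : c' = ± p^(k₂/2), parity contradiction
    obtain ⟨m, hm⟩ := hk2e
    have hw : ((p:ℤ) ^ m) ^ 2 = (p:ℤ) ^ k₂ := by rw [pow_two, ← pow_add, ← hm]
    have hdvd : (q:ℤ) ^ 2 ∣ c' ^ 2 - ((p:ℤ) ^ m) ^ 2 := by
      rw [hw]; exact dvd_sub_comm.mp hd2
    rcases sq_root_rigid (q:ℤ) c' ((p:ℤ) ^ m) ((p:ℤ) ^ k₂) hqZ hqoddZ hc2 (le_of_eq hw)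
        hlt₂ hdvd hqc with h | h
    · rw [h] at hceven
      exact (Int.not_odd_iff_even.mpr hceven) (hpoddZ.pow)
    · rw [h] at hceven
      exact (Int.not_odd_iff_even.mpr hceven) (hpoddZ.pow.neg)
  · rcases Nat.even_or_odd k₁ with hk1e | hk1o
    · -- k₁ even : a = ± p^(k₁/2), so b=c=d=0, contradiction
      obtain ⟨m, hm⟩ := hk1e
      have hw : ((p:ℤ) ^ m) ^ 2 = (p:ℤ) ^ k₁ := by rw [pow_two, ← pow_add, ← hm]
      have hdvd : (q:ℤ) ^ 2 ∣ a ^ 2 - ((p:ℤ) ^ m) ^ 2 := by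
        rw [hw]; exact dvd_sub_comm.mp hd1
      have ha2eq : a ^ 2 = (p:ℤ) ^ k₁ := by
        rcases sq_root_rigid (q:ℤ) a ((p:ℤ) ^ m) ((p:ℤ) ^ k₁) hqZ hqoddZ ha2 (le_of_eq hw)
            hlt₁ hdvd hqa with h | h
        · rw [h, hw]
        · rw [h]; rw [show (-((p:ℤ)^m))^2 = ((p:ℤ)^m)^2 by ring, hw]
      have hq2pos : (0:ℤ) < (q:ℤ) ^ 2 :=
        (sq_nonneg _).lt_of_ne (Ne.symm (pow_ne_zero 2 hqZ.ne_zero))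
      have hsum : b₁ ^ 2 + c₁ ^ 2 + d₁ ^ 2 = 0 := by nlinarith
      have hb0 : b₁ = 0 := by
        have h9 : b₁ ^ 2 = 0 :=
          le_antisymm (by nlinarith [sq_nonneg c₁, sq_nonneg d₁]) (sq_nonneg b₁)
        exact pow_eq_zero_iff (two_ne_zero) |>.mp h9
      have hc0 : c₁ = 0 := by
        have h9 : c₁ ^ 2 = 0 :=
          le_antisymm (by nlinarith [sq_nonneg b₁, sq_nonneg d₁]) (sq_nonneg c₁)
        exact pow_eq_zero_iff (two_ne_zero) |>.mp h9
      have hd0 : d₁ = 0 := by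
        have h9 : d₁ ^ 2 = 0 :=
          le_antisymm (by nlinarith [sq_nonneg b₁, sq_nonneg c₁]) (sq_nonneg d₁)
        exact pow_eq_zero_iff (two_ne_zero) |>.mp h9
      exact hne ⟨by rw [hb0, mul_zero], by rw [hc0, mul_zero], by rw [hd0, mul_zero]⟩
    · -- both odd
      rcases le_total k₁ k₂ with hle | hle
      · obtain ⟨m, hm⟩ : ∃ m, k₂ = k₁ + 2 * m := by
          obtain ⟨i, hi⟩ := hk1o; obtain ⟨j, hj⟩ := hk2o; exact ⟨j - i, by omega⟩
        subst hm
        have hppos : (0:ℤ) < (p:ℤ) ^ (2 * m) := by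
          have : (0:ℤ) < (p:ℤ) := by exact_mod_cast hp.pos
          positivity
        have hwN : (a * (p:ℤ) ^ m) ^ 2 ≤ (p:ℤ) ^ (k₁ + 2 * m) := by
          have h1 : (a * (p:ℤ) ^ m) ^ 2 = a ^ 2 * (p:ℤ) ^ (2 * m) := by
            rw [mul_pow, ← pow_mul, mul_comm m 2]
          have h2 : (p:ℤ) ^ (k₁ + 2 * m) = (p:ℤ) ^ k₁ * (p:ℤ) ^ (2 * m) := pow_add _ _ _
          rw [h1, h2]
          exact mul_le_mul_of_nonneg_right ha2 hppos.le
        obtain ⟨u, hu⟩ := hd1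
        obtain ⟨v, hv⟩ := hd2
        have hdvd : (q:ℤ) ^ 2 ∣ c' ^ 2 - (a * (p:ℤ) ^ m) ^ 2 :=
          ⟨-v + (p:ℤ) ^ (2 * m) * u, by linear_combination -hv + (p:ℤ) ^ (2 * m) * hu⟩
        rcases sq_root_rigid (q:ℤ) c' (a * (p:ℤ) ^ m) ((p:ℤ) ^ (k₁ + 2 * m)) hqZ hqoddZ hc2
            hwN hlt₂ hdvd hqc with h | h
        · rw [h] at hceven
          exact (Int.not_odd_iff_even.mpr hceven) (haodd.mul (hpoddZ.pow))
        · rw [h] at hceven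
          exact (Int.not_odd_iff_even.mpr hceven) ((haodd.mul (hpoddZ.pow)).neg)
      · obtain ⟨m, hm⟩ : ∃ m, k₁ = k₂ + 2 * m := by
          obtain ⟨i, hi⟩ := hk1o; obtain ⟨j, hj⟩ := hk2o; exact ⟨i - j, by omega⟩
        subst hm
        have hppos : (0:ℤ) < (p:ℤ) ^ (2 * m) := by
          have : (0:ℤ) < (p:ℤ) := by exact_mod_cast hp.pos
          positivity
        have hwN : (c' * (p:ℤ) ^ m) ^ 2 ≤ (p:ℤ) ^ (k₂ + 2 * m) := by
          have h1 : (c' * (p:ℤ) ^ m) ^ 2 = c' ^ 2 * (p:ℤ) ^ (2 * m) := by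
            rw [mul_pow, ← pow_mul, mul_comm m 2]
          have h2 : (p:ℤ) ^ (k₂ + 2 * m) = (p:ℤ) ^ k₂ * (p:ℤ) ^ (2 * m) := pow_add _ _ _
          rw [h1, h2]
          exact mul_le_mul_of_nonneg_right hc2 hppos.le
        obtain ⟨u, hu⟩ := hd1
        obtain ⟨v, hv⟩ := hd2
        have hdvd : (q:ℤ) ^ 2 ∣ a ^ 2 - (c' * (p:ℤ) ^ m) ^ 2 :=
          ⟨-u + (p:ℤ) ^ (2 * m) * v, by linear_combination -hu + (p:ℤ) ^ (2 * m) * hv⟩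
        rcases sq_root_rigid (q:ℤ) a (c' * (p:ℤ) ^ m) ((p:ℤ) ^ (k₂ + 2 * m)) hqZ hqoddZ ha2
            hwN hlt₁ hdvd hqa with h | h
        · rw [h] at haodd
          exact (Int.not_odd_iff_even.mpr (hceven.mul_right _)) haodd
        · rw [h] at haodd
          exact (Int.not_odd_iff_even.mpr (hceven.mul_right _).neg) haodd
end

section
/- Let p and q be distinct odd prime numbers and t a natural number. Every type-I solution of level k = 2t satisfies q⁴ ≤ 4·p^{2t}. -/
/-- Let `p` and `q` be distinct odd primes and `t` a natural number.
Every type-I solution of level `k = 2t` satisfies `q⁴ ≤ 4·p^{2t}`. -/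
theorem lps_typeI_even_level_lower_bound
    (p q : ℕ) (hp : p.Prime) (hq : q.Prime) (hpodd : Odd p) (hqodd : Odd q)
    (hpq : p ≠ q) (t : ℕ) (a b c d : ℤ)
    (ha : Odd a)
    (hb : (2 * (q : ℤ)) ∣ b) (hc : (2 * (q : ℤ)) ∣ c) (hd : (2 * (q : ℤ)) ∣ d)
    (hne : ¬ (b = 0 ∧ c = 0 ∧ d = 0))
    (hsum : a ^ 2 + b ^ 2 + c ^ 2 + d ^ 2 = (p : ℤ) ^ (2 * t)) :
    (q : ℤ) ^ 4 ≤ 4 * (p : ℤ) ^ (2 * t) := by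
  have hqZ : Prime (q : ℤ) := by rw [Int.prime_iff_natAbs_prime]; simpa using hq
  set P : ℤ := (p : ℤ) ^ t with hP
  have hppos : (0:ℤ) < (p:ℤ) := by exact_mod_cast hp.pos
  have hPpos : 0 < P := by positivity
  have hPP : P ^ 2 = (p : ℤ) ^ (2 * t) := by rw [hP, ← pow_mul, mul_comm]
  have hfact : (P - a) * (P + a) = b ^ 2 + c ^ 2 + d ^ 2 := by nlinarith [hsum, hPP]
  have hNpos : 0 < b ^ 2 + c ^ 2 + d ^ 2 := by
    have h3 : b ≠ 0 ∨ c ≠ 0 ∨ d ≠ 0 := by tauto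
    rcases h3 with h | h | h <;> positivity
  -- q² divides N
  have hqb : (q : ℤ) ∣ b := (dvd_mul_left (q : ℤ) 2).trans hb
  have hqc : (q : ℤ) ∣ c := (dvd_mul_left (q : ℤ) 2).trans hc
  have hqd : (q : ℤ) ∣ d := (dvd_mul_left (q : ℤ) 2).trans hd
  have hq2N : (q : ℤ) ^ 2 ∣ b ^ 2 + c ^ 2 + d ^ 2 :=
    dvd_add (dvd_add (pow_dvd_pow_of_dvd hqb 2) (pow_dvd_pow_of_dvd hqc 2))
      (pow_dvd_pow_of_dvd hqd 2)
  -- q divides neither 2 nor P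
  have hq3 : 3 ≤ q := hq.two_le.lt_of_ne (by rintro rfl; revert hqodd; decide) 
  have hqnd2 : ¬ (q : ℤ) ∣ 2 := by
    intro h
    have := Int.le_of_dvd (by norm_num) h
    omega
  have hqndP : ¬ (q : ℤ) ∣ P := by
    intro h
    have hqp : (q : ℤ) ∣ (p : ℤ) := hqZ.dvd_of_dvd_pow h
    have : q ∣ p := Int.ofNat_dvd.mp hqp
    exact hpq ((Nat.prime_dvd_prime_iff_eq hq hp).mp this).symm
  -- q cannot divide both factors
  have key : ¬ (q : ℤ) ∣ (P - a) ∨ ¬ (q : ℤ) ∣ (P + a) := by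
    by_contra h
    push_neg at h
    have h2P : (q : ℤ) ∣ 2 * P := by
      have hsum2 := dvd_add h.1 h.2
      have e : (P - a) + (P + a) = 2 * P := by ring
      rwa [e] at hsum2
    rcases hqZ.dvd_mul.mp h2P with h' | h'
    · exact hqnd2 h'
    · exact hqndP h'
  -- both factors positive
  have ha2 : a ^ 2 < P ^ 2 := by nlinarith
  have hpos1 : 0 < P - a := by nlinarith [sq_nonneg (P + a)]
  have hpos2 : 0 < P + a := by nlinarith [sq_nonneg (P - a)]
  -- q² divides one factor, which is ≤ 2P
  have hq2le : (q : ℤ) ^ 2 ≤ 2 * P := by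
    rcases key with h | h
    · have hco : IsCoprime ((q : ℤ) ^ 2) (P - a) :=
        ((hqZ.coprime_iff_not_dvd).mpr h).pow_left
      have hdvd : (q : ℤ) ^ 2 ∣ (P + a) := by
        refine hco.dvd_of_dvd_mul_left ?_
        rw [hfact]; exact hq2N
      have := Int.le_of_dvd hpos2 hdvd
      linarith
    · have hco : IsCoprime ((q : ℤ) ^ 2) (P + a) :=
        ((hqZ.coprime_iff_not_dvd).mpr h).pow_left
      have hdvd : (q : ℤ) ^ 2 ∣ (P - a) := by
        refine hco.dvd_of_dvd_mul_right ?_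
        rw [hfact]; exact hq2N
      have := Int.le_of_dvd hpos1 hdvd
      linarith
  have hqsq : (0 : ℤ) ≤ (q : ℤ) ^ 2 := by positivity
  calc (q : ℤ) ^ 4 = ((q : ℤ) ^ 2) ^ 2 := by ring
    _ ≤ (2 * P) ^ 2 := by nlinarith
    _ = 4 * (p : ℤ) ^ (2 * t) := by rw [mul_pow, hPP]; ring
end

section
/- Let p and q be distinct odd prime numbers and t a natural number. Every type-II solution of level k = 2t satisfies q⁴ ≤ 4·p^{2t}. -/
/-- Let `p` and `q` be distinct odd primes and `t` a natural number.
Every type-II solution of level `k = 2t` satisfies `q⁴ ≤ 4·p^{2t}`. -/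
theorem lps_typeII_even_level_lower_bound
    (p q : ℕ) (hp : p.Prime) (hq : q.Prime) (hpodd : Odd p) (hqodd : Odd q)
    (hpq : p ≠ q) (t : ℕ) (a b c d : ℤ)
    (ha : Odd a)
    (hqa : (q : ℤ) ∣ a) (hqb : (q : ℤ) ∣ b) (hqd : (q : ℤ) ∣ d) (hceven : Even c)
    (hsum : a ^ 2 + b ^ 2 + c ^ 2 + d ^ 2 = (p : ℤ) ^ (2 * t)) :
    (q : ℤ) ^ 4 ≤ 4 * (p : ℤ) ^ (2 * t) := by
  have hqZ : Prime ((q : ℤ)) := (Int.prime_iff_natAbs_prime.mpr (by simpa using hq))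
  set m : ℤ := (p : ℤ) ^ t with hm
  have hmpos : 0 < m := pow_pos (by exact_mod_cast hp.pos) t
  have hm2 : m ^ 2 = (p : ℤ) ^ (2 * t) := by rw [hm, ← pow_mul, mul_comm]
  have hq2 : (q : ℤ) ^ 2 ∣ (m - c) * (m + c) := by
    have h : (m - c) * (m + c) = a ^ 2 + b ^ 2 + d ^ 2 := by nlinarith [hsum, hm2]
    rw [h]
    exact dvd_add (dvd_add (pow_dvd_pow_of_dvd hqa 2) (pow_dvd_pow_of_dvd hqb 2))
      (pow_dvd_pow_of_dvd hqd 2)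
  have hane : a ≠ 0 := by rintro rfl; simp at ha
  have hapos : 0 < a ^ 2 := by positivity
  have hcsq : c ^ 2 < m ^ 2 := by nlinarith [hsum, hm2, sq_nonneg b, sq_nonneg d]
  have h1 : 0 < m - c := by nlinarith
  have h2 : 0 < m + c := by nlinarith
  -- q cannot divide both factors
  have hnotboth : ¬ ((q : ℤ) ∣ (m - c) ∧ (q : ℤ) ∣ (m + c)) := by
    rintro ⟨hu, hv⟩
    have h2m : (q : ℤ) ∣ 2 * m := by
      have h := dvd_add hu hv
      rwa [show (m - c) + (m + c) = 2 * m by ring] at h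
    rcases hqZ.dvd_mul.mp h2m with h | h
    · have h2' : (q : ℕ) ∣ 2 := by exact_mod_cast h
      have := Nat.le_of_dvd (by norm_num) h2'
      have h3 : q ≠ 2 := by rintro rfl; exact (by norm_num : ¬ Odd 2) hqodd
      have := hq.two_le
      omega
    · have hqp : (q : ℤ) ∣ (p : ℤ) := hqZ.dvd_of_dvd_pow h
      have : q ∣ p := by exact_mod_cast hqp
      exact hpq ((Nat.prime_dvd_prime_iff_eq hq hp).mp this).symm
  -- one factor is divisible by q², and that factor is < 2m
  have hkey : (q : ℤ) ^ 2 ≤ 2 * m := by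
    by_cases hqu : (q : ℤ) ∣ (m - c)
    · have hqv : ¬ (q : ℤ) ∣ (m + c) := fun hv => hnotboth ⟨hqu, hv⟩
      have hco : IsCoprime ((q : ℤ) ^ 2) (m + c) :=
        ((hqZ.coprime_iff_not_dvd).mpr hqv).pow_left
      have hdvd : (q : ℤ) ^ 2 ∣ (m - c) := hco.dvd_of_dvd_mul_right hq2
      have := Int.le_of_dvd h1 hdvd
      linarith
    · have hco : IsCoprime ((q : ℤ) ^ 2) (m - c) :=
        ((hqZ.coprime_iff_not_dvd).mpr hqu).pow_left
      have hdvd : (q : ℤ) ^ 2 ∣ (m + c) := hco.dvd_of_dvd_mul_left hq2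
      have := Int.le_of_dvd h2 hdvd
      linarith
  rw [← hm2]
  nlinarith [hkey, sq_nonneg ((q : ℤ)), sq_nonneg ((q : ℤ) ^ 2 - 2 * m), hmpos]
end

section
/- Let p and q be distinct odd primes, let a, c be integers and s a natural number. Suppose a is odd, c is even, q does not divide a, 2·|a|·p^s < q², 2·|c| < q², and q² divides (a·p^s)² − c². Then a contradiction follows (i.e., such data cannot exist). -/
/-- Let `p` and `q` be distinct odd primes, `a`, `c` integers and `s`
a natural number, with `a` odd, `c` even, `q ∤ a`, `2·|a|·p^s < q²`, `2·|c| < q²`, and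
`q² ∣ (a·p^s)² − c²`. Then a contradiction follows. -/
theorem lps_parity_contradiction
    (p q : ℕ) (hp : p.Prime) (hq : q.Prime) (hpodd : Odd p) (hqodd : Odd q)
    (hpq : p ≠ q) (a c : ℤ) (s : ℕ)
    (ha : Odd a) (hc : Even c) (hqa : ¬ (q : ℤ) ∣ a)
    (hsize_a : 2 * |a| * (p : ℤ) ^ s < (q : ℤ) ^ 2)
    (hsize_c : 2 * |c| < (q : ℤ) ^ 2)
    (hdvd : (q : ℤ) ^ 2 ∣ (a * (p : ℤ) ^ s) ^ 2 - c ^ 2) :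
    False := by
  have hqZ : Prime (q : ℤ) := Nat.prime_iff_prime_int.mp hq
  set x : ℤ := a * (p : ℤ) ^ s with hxdef
  have hppos : (0:ℤ) < (p:ℤ) ^ s := by
    have : 0 < p := hp.pos
    positivity
  have hxabs : |x| = |a| * (p:ℤ) ^ s := by
    rw [hxdef, abs_mul, abs_pow, abs_of_nonneg (by positivity : (0:ℤ) ≤ (p:ℤ))]
  have hpZodd : Odd ((p : ℤ)) := by exact_mod_cast hpodd
  have hxodd : Odd x := ha.mul (hpZodd.pow)
  have hqx : ¬ (q : ℤ) ∣ x := by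
    intro h
    rcases hqZ.dvd_mul.mp h with h | h
    · exact hqa h
    · have : (q:ℤ) ∣ (p:ℤ) := hqZ.dvd_of_dvd_pow h
      have : q ∣ p := by exact_mod_cast this
      exact hpq ((Nat.prime_dvd_prime_iff_eq hq hp).mp this).symm
  have hfact : x ^ 2 - c ^ 2 = (x - c) * (x + c) := by ring
  rw [hfact] at hdvd
  have hnotboth : ¬ ((q:ℤ) ∣ x - c ∧ (q:ℤ) ∣ x + c) := by
    rintro ⟨h1, h2⟩
    have h3 : (q:ℤ) ∣ 2 * x := by
      have := dvd_add h1 h2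
      have e : (x - c) + (x + c) = 2 * x := by ring
      rwa [e] at this
    rcases hqZ.dvd_mul.mp h3 with h | h
    · have : q ∣ 2 := by exact_mod_cast h
      have := (Nat.prime_dvd_prime_iff_eq hq Nat.prime_two).mp this
      rcases hqodd with ⟨k, hk⟩; omega
    · exact hqx h
  have hsum : |x| + |c| < (q:ℤ)^2 := by
    have h1 : 2 * |x| < (q:ℤ)^2 := by rw [hxabs]; linarith [hsize_a]
    linarith
  -- q^2 divides one of the factors
  have key : ∀ f g : ℤ, Odd f → (q:ℤ)^2 ∣ f * g → ¬ (q:ℤ) ∣ g → |f| ≤ |x| + |c| → False := by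
    intro f g hfodd hdvd' hqg hle
    have hcop : IsCoprime ((q:ℤ)^2) g := (hqZ.coprime_iff_not_dvd.mpr hqg).pow_left
    have hf : (q:ℤ)^2 ∣ f := hcop.dvd_of_dvd_mul_right hdvd'
    have hfne : f ≠ 0 := by rintro rfl; simp [Int.odd_iff] at hfodd
    have := Int.le_of_dvd (abs_pos.mpr hfne) (dvd_abs _ _ |>.mpr hf)
    linarith
  rcases (hqZ.dvd_mul.mp (dvd_trans (dvd_pow_self (q:ℤ) two_ne_zero) hdvd)) with h | h
  · -- q ∣ x - c, so q ∤ x + c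
    have hqg : ¬ (q:ℤ) ∣ x + c := fun h2 => hnotboth ⟨h, h2⟩
    exact key (x - c) (x + c) (hxodd.sub_even hc) hdvd hqg
      (le_trans (abs_sub _ _) le_rfl)
  · have hqg : ¬ (q:ℤ) ∣ x - c := fun h2 => hnotboth ⟨h2, h⟩
    have hcomm : (q:ℤ)^2 ∣ (x + c) * (x - c) := by rwa [mul_comm] at hdvd
    exact key (x + c) (x - c) (hxodd.add_even hc) hcomm hqg
      (le_trans (abs_add_le _ _) le_rfl)
end

section
/- Let G be a k-regular Ramanujan graph with simple trivial eigenvalue on n vertices (k ≥ 3), let ε > 0 be real, and let R be a natural number with R > (1+ε)·log n / log(k−1). Then for every vertex x, the number of vertices y with S_R(x,y) = 0 is at most n^{1−ε}·(1+R)². -/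
/-!
Diagonalise `A = Σ_j λ_j b_j b_jᵀ` in an orthonormal eigenbasis. Regularity makes the constant
vector an eigenvector for `k`, and since `k` is a simple eigenvalue, `b_{j₀} = 1/√n`. Hence
`S_R(x, y) = W/n + E(y)` with `W = (√(k-1))^R U_R(k/(2√(k-1))) = 1 + (k-1) + ⋯ + (k-1)^R` and
`E(y) = Σ_{j≠j₀} w_j b_j(x) b_j(y)`. By Parseval `Σ_y E(y)² = Σ_{j≠j₀} w_j² b_j(x)²`, and the
Ramanujan bound together with `|U_R| ≤ R + 1` on `[-1, 1]` gives `|w_j| ≤ (R+1)(√(k-1))^R`.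
On the zero set `E(y) = -W/n`, so `#zeros · (W/n)² ≤ (R+1)² (k-1)^R`, and the hypothesis on `R`
says `(k-1)^R ≥ n^{1+ε}`.
-/

open Polynomial Matrix Finset

theorem Real.rpow_le_pow_of_mul_log_div_log_lt {n b a : ℝ} {R : ℕ} (hn : 0 < n) (hb : 1 < b)
    (h : a * Real.log n / Real.log b < R) : n ^ a ≤ b ^ R := by
  rw [← Real.rpow_natCast, Real.rpow_def_of_pos hn, Real.rpow_def_of_pos (by linarith)]
  rw [div_lt_iff₀ (Real.log_pos hb)] at h
  exact Real.exp_le_exp.mpr (by linarith)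

theorem le_rpow_one_sub_mul_of_mul_div_sq_le {N n P W C ε : ℝ} (hn : 0 < n)
    (hnP : n ^ (1 + ε) ≤ P) (hPW : P ≤ W) (hN : 0 ≤ N) (h : N * (W / n) ^ 2 ≤ C * P) :
    N ≤ n ^ (1 - ε) * C := by
  have hP : 0 < P := (Real.rpow_pos_of_pos hn _).trans_le hnP
  have hsplit : n ^ 2 = n ^ (1 - ε) * n ^ (1 + ε) := by
    rw [← Real.rpow_add hn, show (1 - ε) + (1 + ε) = ((2 : ℕ) : ℝ) by norm_num, Real.rpow_natCast]
  have hNP : N * P ≤ C * n ^ 2 := by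
    rw [div_pow, mul_div_assoc', div_le_iff₀ (by positivity)] at h
    nlinarith [mul_le_mul_of_nonneg_left (pow_le_pow_left₀ hP.le hPW 2) hN]
  have hC : 0 ≤ C := by nlinarith [mul_nonneg hN hP.le]
  refine le_of_mul_le_mul_right ?_ hP
  calc N * P ≤ C * (n ^ (1 - ε) * n ^ (1 + ε)) := hsplit ▸ hNP
    _ ≤ n ^ (1 - ε) * C * P := by
      nlinarith [mul_le_mul_of_nonneg_left hnP (mul_nonneg hC (Real.rpow_nonneg hn.le (1 - ε)))]

theorem Real.two_mul_sqrt_sub_one_lt {k : ℝ} (hk : 2 < k) : 2 * √(k - 1) < k := by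
  have hs := Real.sq_sqrt (show 0 ≤ k - 1 by linarith)
  have : 1 < √(k - 1) := by nlinarith [Real.sqrt_nonneg (k - 1)]
  nlinarith

namespace Polynomial.Chebyshev

theorem abs_eval_U_real_le (n : ℕ) {x : ℝ} (hx : |x| ≤ 1) : |(U ℝ n).eval x| ≤ n + 1 := by
  induction n with
  | zero => simp
  | succ n ih =>
    rw [Nat.cast_succ, U_eq_X_mul_U_add_T, eval_add, eval_mul, eval_X]
    calc |x * (U ℝ n).eval x + (T ℝ (n + 1)).eval x|
        ≤ |x| * |(U ℝ n).eval x| + |(T ℝ (n + 1)).eval x| := by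
          rw [← abs_mul]; exact abs_add_le _ _
      _ ≤ 1 * (n + 1) + 1 := by
          gcongr
          exact abs_eval_T_real_le_one _ hx
      _ = (n + 1 : ℕ) + 1 := by push_cast; ring

theorem sqrt_pow_mul_eval_U_real {q : ℝ} (hq : 0 < q) (n : ℕ) :
    √q ^ n * (U ℝ n).eval ((q + 1) / (2 * √q)) = ∑ i ∈ range (n + 1), q ^ i := by
  have hsq : √q ^ 2 = q := Real.sq_sqrt hq.le
  induction n using Nat.twoStepInduction with
  | zero => simp
  | one =>
    simp only [Nat.cast_one, U_one, eval_mul, eval_ofNat, eval_X, sum_range_succ, sum_range_zero]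
    field_simp
    ring
  | more n ih₀ ih₁ =>
    have hrec : (U ℝ (n + 2 : ℕ)) = 2 * X * U ℝ (n + 1 : ℕ) - U ℝ n := by
      push_cast; exact U_add_two ℝ n
    set t := (q + 1) / (2 * √q)
    have hexpand : √q ^ (n + 2) * (2 * t * (U ℝ (n + 1 : ℕ)).eval t - (U ℝ n).eval t)
        = (q + 1) * (√q ^ (n + 1) * (U ℝ (n + 1 : ℕ)).eval t) - q * (√q ^ n * (U ℝ n).eval t) := by
      have h2t : 2 * t * √q = q + 1 := by simp only [t]; field_simp
      linear_combination (√q ^ (n + 1) * (U ℝ (n + 1 : ℕ)).eval t) * h2t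
        - (√q ^ n * (U ℝ n).eval t) * hsq
    rw [hrec, eval_sub, eval_mul, eval_mul, eval_X, eval_ofNat, hexpand, ih₁, ih₀,
      sum_range_succ _ (n + 2), sum_range_succ _ (n + 1)]
    ring

theorem abs_sqrt_pow_mul_eval_U_real_le {q : ℝ} (hq : 0 < q) (n : ℕ) {t : ℝ}
    (ht : |t| ≤ 2 * √q) : |√q ^ n * (U ℝ n).eval (t / (2 * √q))| ≤ (n + 1) * √q ^ n := by
  have hs : 0 < √q := Real.sqrt_pos.mpr hq
  rw [abs_mul, abs_of_pos (pow_pos hs n), mul_comm]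
  refine mul_le_mul_of_nonneg_right (abs_eval_U_real_le n ?_) (pow_pos hs n).le
  rwa [abs_div, abs_of_pos (by positivity : (0 : ℝ) < 2 * √q), div_le_one (by positivity)]

end Polynomial.Chebyshev

theorem ncard_setOf_eq_mul_sq_le_sum_sq {ι : Type*} [Fintype ι] (f : ι → ℝ) (c : ℝ) :
    {i | f i = c}.ncard * c ^ 2 ≤ ∑ i, f i ^ 2 := by
  classical
  rw [Set.ncard_eq_toFinset_card', Set.toFinset_ofPred, ← nsmul_eq_mul, ← sum_const]
  calc ∑ i ∈ univ.filter (f · = c), c ^ 2 = ∑ i ∈ univ.filter (f · = c), f i ^ 2 :=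
        sum_congr rfl fun i hi => by rw [(mem_filter.mp hi).2]
    _ ≤ ∑ i, f i ^ 2 := sum_le_sum_of_subset_of_nonneg (filter_subset _ _) fun i _ _ => sq_nonneg _

namespace Matrix.IsHermitian

variable {V : Type*} [Fintype V] [DecidableEq V] {A : Matrix V V ℝ} (hA : A.IsHermitian)

theorem cfc_apply_eq_sum (f : ℝ → ℝ) (x y : V) :
    hA.cfc f x y =
      ∑ j, f (hA.eigenvalues j) * (hA.eigenvectorBasis j x * hA.eigenvectorBasis j y) := by
  simp only [IsHermitian.cfc, Unitary.conjStarAlgAut_apply, mul_apply, diagonal_apply, mul_ite,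
    mul_zero, sum_ite_eq', mem_univ, if_true, star_apply, star_trivial, eigenvectorUnitary_apply,
    RCLike.ofReal_real_eq_id, Function.comp_apply, id]
  exact sum_congr rfl fun j _ => by ring

theorem sum_eigenvectorBasis_mul_eigenvectorBasis (x y : V) :
    ∑ j, hA.eigenvectorBasis j x * hA.eigenvectorBasis j y = if x = y then 1 else 0 := by
  simpa [mul_apply, one_apply, eigenvectorUnitary_apply] using
    congrFun₂ (Unitary.coe_mul_star_self hA.eigenvectorUnitary) x y

theorem sum_sq_sum_mul_eigenvectorBasis (a : V → ℝ) :
    ∑ y, (∑ j, a j * hA.eigenvectorBasis j y) ^ 2 = ∑ j, a j ^ 2 := by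
  set U : Matrix V V ℝ := ↑hA.eigenvectorUnitary
  have hU : Uᵀ * U = 1 := by
    simpa [U, star_eq_conjTranspose] using Unitary.coe_star_mul_self hA.eigenvectorUnitary
  have hUa : ∀ y, ∑ j, a j * hA.eigenvectorBasis j y = (U *ᵥ a) y := fun y => by
    simp only [U, mulVec, dotProduct, eigenvectorUnitary_apply, mul_comm]
  simp only [hUa, sq]
  change (U *ᵥ a) ⬝ᵥ (U *ᵥ a) = a ⬝ᵥ a
  rw [dotProduct_mulVec, vecMul_mulVec, hU, vecMul_one]

theorem sum_eigenvectorBasis_eq_zero {μ : ℝ} (hμ : A *ᵥ 1 = μ • 1) {j : V}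
    (hj : hA.eigenvalues j ≠ μ) : ∑ y, hA.eigenvectorBasis j y = 0 := by
  set v : V → ℝ := (hA.eigenvectorBasis j).ofLp
  have hsym : Aᵀ = A := by simpa using hA.eq
  have key : hA.eigenvalues j * (1 ⬝ᵥ v) = μ * (1 ⬝ᵥ v) := by
    calc hA.eigenvalues j * (1 ⬝ᵥ v) = 1 ⬝ᵥ (A *ᵥ v) := by
          rw [hA.mulVec_eigenvectorBasis, dotProduct_smul, smul_eq_mul]
      _ = (A *ᵥ 1) ⬝ᵥ v := by rw [dotProduct_mulVec, ← vecMul_transpose, hsym]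
      _ = μ * (1 ⬝ᵥ v) := by rw [hμ, smul_dotProduct, smul_eq_mul]
  rw [← one_dotProduct]
  exact (mul_eq_zero.mp (by linear_combination key)).resolve_left (sub_ne_zero.mpr hj)

theorem eigenvectorBasis_mul_eigenvectorBasis_eq_inv_card {μ : ℝ} (hμ : A *ᵥ 1 = μ • 1) {j₀ : V}
    (hsimple : ∀ j ≠ j₀, hA.eigenvalues j ≠ μ) (x y : V) :
    hA.eigenvectorBasis j₀ x * hA.eigenvectorBasis j₀ y = (Fintype.card V : ℝ)⁻¹ := by
  set c := ∑ z, hA.eigenvectorBasis j₀ z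
  have hrow : ∀ x, hA.eigenvectorBasis j₀ x * c = 1 := fun x => by
    calc hA.eigenvectorBasis j₀ x * c
        = ∑ j, hA.eigenvectorBasis j x * ∑ z, hA.eigenvectorBasis j z := by
          rw [Fintype.sum_eq_single j₀ fun j hj => by
            rw [hA.sum_eigenvectorBasis_eq_zero hμ (hsimple j hj), mul_zero]]
      _ = ∑ z, ∑ j, hA.eigenvectorBasis j x * hA.eigenvectorBasis j z := by
          simp only [mul_sum]; exact sum_comm
      _ = 1 := by simp [sum_eigenvectorBasis_mul_eigenvectorBasis]
  have hcard : c * c = Fintype.card V := by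
    calc c * c = ∑ x, hA.eigenvectorBasis j₀ x * c := sum_mul _ _ _
      _ = Fintype.card V := by simp [hrow]
  rw [eq_inv_of_mul_eq_one_left (hrow x), eq_inv_of_mul_eq_one_left (hrow y), ← hcard, mul_inv]

theorem smul_aeval_smul_eq_cfc (r c : ℝ) (p : ℝ[X]) :
    r • aeval (c • A) p = hA.cfc fun t => r * p.eval (c * t) := by
  have hcA : IsSelfAdjoint (c • A) := .smul (.all c) hA.isSelfAdjoint
  rw [← cfc_polynomial p _ hcA, ← cfc_comp_smul c _ A (by fun_prop) hA.isSelfAdjoint,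
    ← cfc_const_mul r _ A (by fun_prop), hA.cfc_eq]
  rfl

theorem ncard_setOf_cfc_apply_eq_zero_mul_sq_le {μ : ℝ} (hμ : A *ᵥ 1 = μ • 1) {j₀ : V}
    (hsimple : ∀ j ≠ j₀, hA.eigenvalues j ≠ μ) {f : ℝ → ℝ} {B : ℝ}
    (hB : ∀ j ≠ j₀, |f (hA.eigenvalues j)| ≤ B) (x : V) :
    {y | hA.cfc f x y = 0}.ncard * (f (hA.eigenvalues j₀) / Fintype.card V) ^ 2 ≤ B ^ 2 := by
  set a : V → ℝ := fun j => if j = j₀ then 0 else f (hA.eigenvalues j) * hA.eigenvectorBasis j x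
  set W := f (hA.eigenvalues j₀) / Fintype.card V
  have hsplit : ∀ y, hA.cfc f x y = W + ∑ j, a j * hA.eigenvectorBasis j y := by
    intro y
    rw [cfc_apply_eq_sum, ← add_sum_erase _ _ (mem_univ j₀), ← add_sum_erase _ _ (mem_univ j₀),
      hA.eigenvectorBasis_mul_eigenvectorBasis_eq_inv_card hμ hsimple]
    simp only [a, W, div_eq_mul_inv, if_true, zero_mul, zero_add]
    congr 1
    exact sum_congr rfl fun j hj => by rw [if_neg (ne_of_mem_erase hj), mul_assoc]
  have hzero : {y | hA.cfc f x y = 0} = {y | ∑ j, a j * hA.eigenvectorBasis j y = -W} := by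
    ext y
    simp only [Set.mem_ofPred_eq, hsplit, add_eq_zero_iff_eq_neg']
  calc _ = {y | hA.cfc f x y = 0}.ncard * (-W) ^ 2 := by rw [neg_sq]
    _ ≤ ∑ y, (∑ j, a j * hA.eigenvectorBasis j y) ^ 2 :=
        hzero ▸ ncard_setOf_eq_mul_sq_le_sum_sq _ _
    _ = ∑ j, a j ^ 2 := hA.sum_sq_sum_mul_eigenvectorBasis a
    _ ≤ ∑ j, B ^ 2 * hA.eigenvectorBasis j x ^ 2 := by
        refine sum_le_sum fun j _ => ?_
        by_cases hj : j = j₀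
        · simp only [a, if_pos hj, zero_pow two_ne_zero]; positivity
        · simp only [a, if_neg hj, mul_pow]
          exact mul_le_mul_of_nonneg_right (sq_le_sq.mpr ((hB j hj).trans (le_abs_self B)))
            (sq_nonneg _)
    _ = B ^ 2 := by
        have hrow := hA.sum_eigenvectorBasis_mul_eigenvectorBasis x x
        rw [if_pos rfl] at hrow
        simp only [← mul_sum, sq, hrow, mul_one]

end Matrix.IsHermitian

theorem ramanujan_sphere_operator_zero_entries_general
    {V : Type*} [Fintype V] [DecidableEq V]
    (G : SimpleGraph V) [DecidableRel G.Adj]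
    (k : ℕ) (hk : 3 ≤ k) (hreg : G.IsRegularOfDegree k)
    (hA : (G.adjMatrix ℝ).IsHermitian)
    (j₀ : V) (hj₀ : hA.eigenvalues j₀ = k)
    (hram : ∀ j ≠ j₀, |hA.eigenvalues j| ≤ 2 * Real.sqrt ((k : ℝ) - 1))
    (ε : ℝ) (R : ℕ)
    (hR : (R : ℝ) > (1 + ε) * Real.log (Fintype.card V) / Real.log ((k : ℝ) - 1))
    (x : V) :
    ({y : V |
        (Real.sqrt ((k : ℝ) - 1) ^ R •
          aeval ((1 / (2 * Real.sqrt ((k : ℝ) - 1))) • G.adjMatrix ℝ)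
            (Chebyshev.U ℝ (R : ℤ))) x y = 0}.ncard : ℝ)
      ≤ (Fintype.card V : ℝ) ^ ((1 : ℝ) - ε) * (1 + (R : ℝ)) ^ 2 := by
  have hk' : (3 : ℝ) ≤ k := by exact_mod_cast hk
  have hq : 0 < (k : ℝ) - 1 := by linarith
  set s := √((k : ℝ) - 1)
  have hn : (0 : ℝ) < Fintype.card V := Nat.cast_pos.mpr (Fintype.card_pos_iff.mpr ⟨j₀⟩)
  have hregular : G.adjMatrix ℝ *ᵥ 1 = (k : ℝ) • 1 := funext fun v => by
    simpa using G.adjMatrix_mulVec_const_apply_of_regular (a := (1 : ℝ)) hreg (v := v)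
  have hsimple : ∀ j ≠ j₀, hA.eigenvalues j ≠ k := fun j hj heq => by
    have hkram := hram j hj
    rw [heq, Nat.abs_cast] at hkram
    exact (Real.two_mul_sqrt_sub_one_lt (by linarith)).not_ge hkram
  have hcount := hA.ncard_setOf_cfc_apply_eq_zero_mul_sq_le hregular hsimple
    (f := fun t => s ^ R * (Chebyshev.U ℝ R).eval (t / (2 * s)))
    (fun j hj => Chebyshev.abs_sqrt_pow_mul_eval_U_real_le hq R (hram j hj)) x
  have htrivial : ((k : ℝ) - 1) ^ R ≤ s ^ R * (Chebyshev.U ℝ R).eval (k / (2 * s)) := by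
    have hsum := Chebyshev.sqrt_pow_mul_eval_U_real hq R
    rw [sub_add_cancel] at hsum
    exact hsum ▸ single_le_sum (fun i _ => by positivity) (self_mem_range_succ R)
  rw [hA.smul_aeval_smul_eq_cfc]
  simp only [one_div_mul_eq_div]
  refine le_rpow_one_sub_mul_of_mul_div_sq_le hn
    (Real.rpow_le_pow_of_mul_log_div_log_lt hn (by linarith) hR) htrivial (Nat.cast_nonneg _) ?_
  calc _ ≤ ((R + 1) * s ^ R) ^ 2 := hj₀ ▸ hcount
    _ = (1 + R) ^ 2 * ((k : ℝ) - 1) ^ R := by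
      rw [mul_pow, ← pow_mul, mul_comm R, pow_mul, Real.sq_sqrt hq.le, add_comm]

/-- Let `G` be a `k`-regular Ramanujan graph (with simple trivial
eigenvalue `k`) on `n` vertices, `k ≥ 3`, let `ε > 0`, and let `R` be a natural number
with `R > (1+ε)·log n / log(k−1)`, i.e. `R > (1+ε)·log_{k-1} n`. Setting
`S_R := (√(k−1))^R · U_R(A/(2√(k−1)))` where `A` is the adjacency matrix and `U_R` is
the Chebyshev polynomial of the second kind, for every vertex `x` the number of
vertices `y` with `S_R(x,y) = 0` is at most `n^{1−ε}·(1+R)²`. -/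
theorem ramanujan_sphere_operator_zero_entries
    {V : Type*} [Fintype V] [DecidableEq V]
    (G : SimpleGraph V) [DecidableRel G.Adj]
    (k : ℕ) (hk : 3 ≤ k) (hreg : G.IsRegularOfDegree k)
    (hA : (G.adjMatrix ℝ).IsHermitian)
    (j₀ : V) (hj₀ : hA.eigenvalues j₀ = k)
    (hram : ∀ j ≠ j₀, |hA.eigenvalues j| ≤ 2 * Real.sqrt ((k : ℝ) - 1))
    (ε : ℝ) (hε : 0 < ε) (R : ℕ)
    (hR : (R : ℝ) > (1 + ε) * Real.log (Fintype.card V) / Real.log ((k : ℝ) - 1))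
    (x : V) :
    ({y : V |
        (Real.sqrt ((k : ℝ) - 1) ^ R •
          aeval ((1 / (2 * Real.sqrt ((k : ℝ) - 1))) • G.adjMatrix ℝ)
            (Chebyshev.U ℝ (R : ℤ))) x y = 0}.ncard : ℝ)
      ≤ (Fintype.card V : ℝ) ^ ((1 : ℝ) - ε) * (1 + (R : ℝ)) ^ 2 :=
  ramanujan_sphere_operator_zero_entries_general G k hk hreg hA j₀ hj₀ hram ε R hR x
end
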